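/- arXiv:2511.06162 — 5 statements merged into one kernel-verified Lean document; each statement's English description precedes it below -/
import Mathlib

section
/- Given an undirected tree T = (V, E) and a multiset F of undirected links such that every fundamental cut of T is crossed by F at least twice (counting multiplicity), there exists an orientation F⃗ of the links in F such that every fundamental cut of T is crossed by F⃗ at least once in each direction. -/
open scoped Classical

/-- A tree on vertex set `V`, rooted at `root`, encoded via the parent function.
Every non-root vertex `z` corresponds to the unique tree edge/arc `a_z` between
`z` and `parent z`. -/
structure ArcTree (V : Type*) where
  root : V
  parent : V → V
  parent_root : parent root = root
  reaches_root : ∀ v : V, ∃ n : ℕ, parent^[n] v = root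

namespace ArcTree

variable {V : Type*}

/-- `x` is an ancestor of `y` (possibly `x = y`). -/
def anc (T : ArcTree V) (x y : V) : Prop := ∃ n : ℕ, T.parent^[n] y = x

/-- The arc `a_z` (between `z` and `parent z`, for `z ≠ root`) lies on the
tree path between `u` and `v`. -/
def arcOnPath (T : ArcTree V) (u v z : V) : Prop :=
  z ≠ T.root ∧ ¬ (T.anc z u ↔ T.anc z v)

/-- The vertex `x` lies on the tree path between `u` and `v`. -/
def onPath (T : ArcTree V) (u v x : V) : Prop :=
  (T.anc x u ∨ T.anc x v) ∧ ∀ z, T.anc z u → T.anc z v → T.anc z x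

/-- `x` is an inner vertex of the tree path between `u` and `v`. -/
def innerOnPath (T : ArcTree V) (u v x : V) : Prop :=
  T.onPath u v x ∧ x ≠ u ∧ x ≠ v

/-- `w` is the least common ancestor of `u` and `v`. -/
def isLca (T : ArcTree V) (u v w : V) : Prop :=
  T.anc w u ∧ T.anc w v ∧ ∀ z, T.anc z u → T.anc z v → T.anc z w

end ArcTree

section Cover

variable {V : Type*}

/- Orientation convention: `up z = true` means the arc `a_z` is directed from `z` to
`parent z` (an up-arc, pointing towards the root); `up z = false` means it is directed
from `parent z` to `z` (a down-arc). -/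

/-- The directed link `ℓ = (u, v)` covers the arc `a_z`, i.e. `a_z` is a backward arc
of the tree path from `u` to `v` (equivalently, the walk from `v` back to `u`
traverses `a_z` in its forward direction). -/
def covers (T : ArcTree V) (up : V → Bool) (ℓ : V × V) (z : V) : Prop :=
  z ≠ T.root ∧
    ((T.anc z ℓ.2 ∧ ¬ T.anc z ℓ.1 ∧ up z = true) ∨
     (T.anc z ℓ.1 ∧ ¬ T.anc z ℓ.2 ∧ up z = false))

/-- The link `ℓ = (u,v)` covers the arc `a_z` in the wrong direction, i.e. `a_z` is a
forward arc of the tree path from `u` to `v`. -/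
def wcovers (T : ArcTree V) (up : V → Bool) (ℓ : V × V) (z : V) : Prop :=
  z ≠ T.root ∧
    ((T.anc z ℓ.1 ∧ ¬ T.anc z ℓ.2 ∧ up z = true) ∨
     (T.anc z ℓ.2 ∧ ¬ T.anc z ℓ.1 ∧ up z = false))

/-- `ℓ'` is a shadow of `ℓ`: the endpoints of `ℓ'` lie, in this order, on the tree path
of `ℓ`. -/
def IsShadow (T : ArcTree V) (ℓ ℓ' : V × V) : Prop :=
  T.onPath ℓ.1 ℓ.2 ℓ'.1 ∧ T.onPath ℓ'.1 ℓ.2 ℓ'.2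

/-- `x` is an inner vertex of the path of the generic shadow of `ℓ` (the minimal shadow
with the same directed coverage): `x` lies on `P_ℓ` and `ℓ` covers arcs on both sides
of `x`. -/
def innerGeneric (T : ArcTree V) (up : V → Bool) (ℓ : V × V) (x : V) : Prop :=
  T.onPath ℓ.1 ℓ.2 x ∧
    (∃ z, covers T up ℓ z ∧ T.arcOnPath ℓ.1 x z) ∧
    (∃ z, covers T up ℓ z ∧ T.arcOnPath x ℓ.2 z)

/-- The arc `a_z` (lying in the subtree of `v`) is visible to `v` with respect to the
link set `L'`. -/
def visibleArc (T : ArcTree V) (up : V → Bool) (L' : Set (V × V)) (v z : V) : Prop :=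
  T.anc v z ∧ z ≠ v ∧ ∃ ℓ ∈ L', covers T up ℓ z ∧ innerGeneric T up ℓ v

/-- A set of arcs (encoded by their lower endpoints) is ancestor-free: no arc of the
set lies on the path from another arc's apex (top endpoint) to the root. -/
def AncestorFree (T : ArcTree V) (S : Set V) : Prop :=
  ∀ z ∈ S, ∀ z' ∈ S, z ≠ z' → ¬ T.anc z' (T.parent z)

/-- The visible up-width of `v` w.r.t. the link set `L'` is at most `k`. -/
def upWidthLE (T : ArcTree V) (up : V → Bool) (L' : Set (V × V)) (v : V) (k : ℕ) : Prop :=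
  ∀ S : Finset V, AncestorFree T (S : Set V) →
    (∀ z ∈ S, up z = true ∧ visibleArc T up L' v z) → S.card ≤ k

/-- The visible down-width of `v` w.r.t. the link set `L'` is at most `k`. -/
def downWidthLE (T : ArcTree V) (up : V → Bool) (L' : Set (V × V)) (v : V) (k : ℕ) : Prop :=
  ∀ S : Finset V, AncestorFree T (S : Set V) →
    (∀ z ∈ S, up z = false ∧ visibleArc T up L' v z) → S.card ≤ k

/-- The link `ℓ` points into the subtree `T_v`. -/
def pointsInto (T : ArcTree V) (v : V) (ℓ : V × V) : Prop :=
  T.anc v ℓ.2 ∧ ℓ.2 ≠ v ∧ ¬ T.anc v ℓ.1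

/-- The link `ℓ` points out of the subtree `T_v`. -/
def pointsOut (T : ArcTree V) (v : V) (ℓ : V × V) : Prop :=
  T.anc v ℓ.1 ∧ ℓ.1 ≠ v ∧ ¬ T.anc v ℓ.2

/-- `v` is up-independent w.r.t. the link set `L'`: every link either covers no up-arc
of the subtree `T_v`, or its whole coverage lies inside `T_v`. -/
def upIndep (T : ArcTree V) (up : V → Bool) (L' : Set (V × V)) (v : V) : Prop :=
  ∀ ℓ ∈ L', (¬ ∃ z, covers T up ℓ z ∧ T.anc v z ∧ z ≠ v ∧ up z = true) ∨
    (∀ z, covers T up ℓ z → T.anc v z ∧ z ≠ v)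

/-- `v` is down-independent w.r.t. the link set `L'`. -/
def downIndep (T : ArcTree V) (up : V → Bool) (L' : Set (V × V)) (v : V) : Prop :=
  ∀ ℓ ∈ L', (¬ ∃ z, covers T up ℓ z ∧ T.anc v z ∧ z ≠ v ∧ up z = false) ∨
    (∀ z, covers T up ℓ z → T.anc v z ∧ z ≠ v)

/-- A feasible (integral) solution: every arc is covered by some link of `F`. -/
def Feasible (T : ArcTree V) (up : V → Bool) (F : Finset (V × V)) : Prop :=
  ∀ z, z ≠ T.root → ∃ ℓ ∈ F, covers T up ℓ z

/-- `F` is shadow-minimal: no link of `F` can be replaced by a proper shadow while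
maintaining feasibility. -/
def ShadowMinimal (T : ArcTree V) (up : V → Bool) (F : Finset (V × V)) : Prop :=
  ∀ ℓ ∈ F, ∀ ℓ' : V × V, IsShadow T ℓ ℓ' → ℓ' ≠ ℓ →
    ¬ Feasible T up (insert ℓ' (F.erase ℓ))

/-- A splitting of the link set: each link is mapped to a set of shadows whose tree
paths partition the arc set of its tree path. -/
def IsSplitting (T : ArcTree V) (σ : V × V → Finset (V × V)) : Prop :=
  ∀ ℓ : V × V,
    (σ ℓ).Nonempty ∧
    (∀ ℓ' ∈ σ ℓ, IsShadow T ℓ ℓ' ∧ (ℓ'.1 ≠ ℓ'.2 ∨ ℓ' = ℓ)) ∧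
    (∀ z, T.arcOnPath ℓ.1 ℓ.2 z ↔ ∃ ℓ' ∈ σ ℓ, T.arcOnPath ℓ'.1 ℓ'.2 z) ∧
    (∀ ℓ₁ ∈ σ ℓ, ∀ ℓ₂ ∈ σ ℓ, ℓ₁ ≠ ℓ₂ →
      ∀ z, T.arcOnPath ℓ₁.1 ℓ₁.2 z → ¬ T.arcOnPath ℓ₂.1 ℓ₂.2 z)

/-- The LP solution obtained from `x` by applying the splitting `σ`. -/
noncomputable def splitSol [Fintype V] (σ : V × V → Finset (V × V)) (x : V × V → ℝ) :
    V × V → ℝ :=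
  fun ℓ' => ∑ ℓ : V × V, if ℓ' ∈ σ ℓ then x ℓ else 0

/-- `x` is a feasible solution of the WDTAP set-covering LP. -/
def FeasLP [Fintype V] (T : ArcTree V) (up : V → Bool) (x : V × V → ℝ) : Prop :=
  (∀ ℓ, 0 ≤ x ℓ) ∧
    ∀ z, z ≠ T.root → 1 ≤ ∑ ℓ : V × V, if covers T up ℓ z then x ℓ else 0

end Cover

namespace TwoCoverAux

variable {V : Type*}

lemma anc_trans (T : ArcTree V) {x y z : V} (h1 : T.anc x y) (h2 : T.anc y z) :
    T.anc x z := by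
  obtain ⟨m, hm⟩ := h1; obtain ⟨n, hn⟩ := h2
  exact ⟨m + n, by rw [Function.iterate_add_apply, hn, hm]⟩

lemma anc_comparable (T : ArcTree V) {x w a : V} (hx : T.anc x a) (hw : T.anc w a) :
    T.anc x w ∨ T.anc w x := by
  obtain ⟨k, hk⟩ := hx; obtain ⟨m, hm⟩ := hw
  rcases le_total k m with h | h
  · right
    exact ⟨m - k, by rw [← hk, ← Function.iterate_add_apply, Nat.sub_add_cancel h, hm]⟩
  · left
    exact ⟨k - m, by rw [← hm, ← Function.iterate_add_apply, Nat.sub_add_cancel h, hk]⟩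

lemma iterate_root (T : ArcTree V) (n : ℕ) : T.parent^[n] T.root = T.root := by
  induction n with
  | zero => rfl
  | succ n ih => rw [Function.iterate_succ_apply', ih, T.parent_root]

noncomputable def depth (T : ArcTree V) (v : V) : ℕ := Nat.find (T.reaches_root v)

lemma depth_spec (T : ArcTree V) (v : V) : T.parent^[depth T v] v = T.root := by
  unfold depth; exact Nat.find_spec (T.reaches_root v)

lemma depth_le (T : ArcTree V) {v : V} {n : ℕ} (h : T.parent^[n] v = T.root) :
    depth T v ≤ n := by
  unfold depth; exact Nat.find_le h

lemma iterate_eq_root (T : ArcTree V) {v : V} {k : ℕ} (h : depth T v ≤ k) :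
    T.parent^[k] v = T.root := by
  calc T.parent^[k] v = T.parent^[(k - depth T v) + depth T v] v := by
        rw [Nat.sub_add_cancel h]
  _ = T.parent^[k - depth T v] (T.parent^[depth T v] v) := Function.iterate_add_apply ..
  _ = T.root := by rw [depth_spec, iterate_root]

lemma depth_le_of_anc (T : ArcTree V) {x a : V} (h : T.anc x a) :
    depth T x ≤ depth T a := by
  obtain ⟨k, hk⟩ := h
  rcases le_or_gt k (depth T a) with hle | hlt
  · have hr : T.parent^[depth T a - k] x = T.root := by
      rw [← hk, ← Function.iterate_add_apply, Nat.sub_add_cancel hle]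
      exact depth_spec T a
    have := depth_le T hr
    omega
  · have hx : x = T.root := by rw [← hk]; exact iterate_eq_root T hlt.le
    have h0 : T.parent^[0] x = T.root := hx
    have := depth_le T h0
    omega

lemma depth_lt_of_anc (T : ArcTree V) {w x : V} (hw : w ≠ T.root) (h : T.anc w x)
    (hne : x ≠ w) : depth T w < depth T x := by
  obtain ⟨k, hk⟩ := h
  have hk0 : k ≠ 0 := by rintro rfl; simp at hk; exact hne hk
  have hkle : k ≤ depth T x := by
    by_contra hlt
    push_neg at hlt
    exact hw (by rw [← hk]; exact iterate_eq_root T hlt.le)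
  have hr : T.parent^[depth T x - k] w = T.root := by
    rw [← hk, ← Function.iterate_add_apply, Nat.sub_add_cancel hkle]
    exact depth_spec T x
  have := depth_le T hr
  omega


noncomputable def cnt (T : ArcTree V) (F : Multiset (Sym2 V)) (w : V) : ℕ :=
  (F.filter (fun e => ∃ a b : V, e = Sym2.mk a b ∧ T.anc w a ∧ ¬ T.anc w b)).card

lemma crossP_mk (T : ArcTree V) (w a b : V) :
    (∃ c d : V, Sym2.mk a b = Sym2.mk c d ∧ T.anc w c ∧ ¬ T.anc w d) ↔
      (T.anc w a ∧ ¬ T.anc w b) ∨ (T.anc w b ∧ ¬ T.anc w a) := by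
  constructor
  · rintro ⟨c, d, hcd, h1, h2⟩
    rw [Sym2.eq_iff] at hcd
    rcases hcd with ⟨rfl, rfl⟩ | ⟨rfl, rfl⟩
    · exact Or.inl ⟨h1, h2⟩
    · exact Or.inr ⟨h1, h2⟩
  · rintro (⟨h1, h2⟩ | ⟨h1, h2⟩)
    · exact ⟨a, b, rfl, h1, h2⟩
    · exact ⟨b, a, Sym2.eq_swap, h1, h2⟩

lemma cnt_cons_pos (T : ArcTree V) {e : Sym2 V} {x : V}
    (h : ∃ a b : V, e = Sym2.mk a b ∧ T.anc x a ∧ ¬ T.anc x b) (F : Multiset (Sym2 V)) :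
    cnt T (e ::ₘ F) x = cnt T F x + 1 := by
  unfold cnt
  rw [Multiset.filter_cons_of_pos (p := fun e => ∃ a b : V, e = Sym2.mk a b ∧ T.anc x a ∧ ¬ T.anc x b) _ h, Multiset.card_cons]

lemma cnt_cons_neg (T : ArcTree V) {e : Sym2 V} {x : V}
    (h : ¬ ∃ a b : V, e = Sym2.mk a b ∧ T.anc x a ∧ ¬ T.anc x b) (F : Multiset (Sym2 V)) :
    cnt T (e ::ₘ F) x = cnt T F x := by
  unfold cnt
  rw [Multiset.filter_cons_of_neg (p := fun e => ∃ a b : V, e = Sym2.mk a b ∧ T.anc x a ∧ ¬ T.anc x b) _ h]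

lemma exists_two {α : Type*} (p : α → Prop) (F : Multiset α)
    (h : 2 ≤ (F.filter p).card) :
    ∃ e1 e2 F₀, F = e1 ::ₘ e2 ::ₘ F₀ ∧ p e1 ∧ p e2 := by
  classical
  obtain ⟨e1, he1⟩ := Multiset.exists_mem_of_ne_zero
    (by intro h0; rw [h0] at h; simp at h : F.filter p ≠ 0)
  rw [Multiset.mem_filter] at he1
  obtain ⟨F₁, rfl⟩ := Multiset.exists_cons_of_mem he1.1
  rw [Multiset.filter_cons_of_pos _ he1.2, Multiset.card_cons] at h
  obtain ⟨e2, he2⟩ := Multiset.exists_mem_of_ne_zero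
    (by intro h0; rw [h0] at h; simp at h : F₁.filter p ≠ 0)
  rw [Multiset.mem_filter] at he2
  obtain ⟨F₀, rfl⟩ := Multiset.exists_cons_of_mem he2.1
  exact ⟨e1, e2, F₀, rfl, he1.2, he2.2⟩

lemma exists_lift (F : Multiset (Sym2 V)) :
    ∃ G : Multiset (V × V), G.map (fun p => Sym2.mk p.1 p.2) = F := by
  induction F using Multiset.induction with
  | empty => exact ⟨0, rfl⟩
  | cons e F ih =>
    obtain ⟨G, hG⟩ := ih
    obtain ⟨a, b, rfl⟩ : ∃ a b, e = Sym2.mk a b := by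
      induction e using Sym2.inductionOn with
      | hf a b => exact ⟨a, b, rfl⟩
    exact ⟨(a, b) ::ₘ G, by rw [Multiset.map_cons, hG]⟩

lemma exists_min (T : ArcTree V) (F : Multiset (Sym2 V)) (w0 : V) (h0 : w0 ≠ T.root)
    (hc0 : 2 ≤ cnt T F w0) :
    ∃ w, w ≠ T.root ∧ 2 ≤ cnt T F w ∧
      ∀ x, x ≠ T.root → 2 ≤ cnt T F x → T.anc w x → x = w := by
  classical
  set dep : Sym2 V → ℕ :=
    fun e => Sym2.lift ⟨fun a b => max (depth T a) (depth T b), fun a b => max_comm _ _⟩ e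
    with hdep
  set N : ℕ := (F.map dep).sum with hN
  have hbound : ∀ x, 2 ≤ cnt T F x → depth T x ≤ N := by
    intro x hx
    obtain ⟨e, he⟩ := Multiset.exists_mem_of_ne_zero
      (by intro h0'; unfold cnt at hx; rw [h0'] at hx; simp at hx :
         F.filter (fun e => ∃ a b : V, e = Sym2.mk a b ∧ T.anc x a ∧ ¬ T.anc x b) ≠ 0)
    rw [Multiset.mem_filter] at he
    obtain ⟨a, b, heq, ha, -⟩ := he.2
    have h1 : depth T x ≤ depth T a := depth_le_of_anc T ha
    have h2 : depth T a ≤ dep e := by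
      rw [heq, hdep]; simp [Sym2.lift_mk]
    have h3 : dep e ≤ N := by
      rw [hN]
      exact Multiset.single_le_sum (fun y _ => Nat.zero_le y) _
        (Multiset.mem_map_of_mem dep he.1)
    omega
  have main : ∀ k w, w ≠ T.root → 2 ≤ cnt T F w → N - depth T w < k →
      ∃ m, m ≠ T.root ∧ 2 ≤ cnt T F m ∧
        ∀ x, x ≠ T.root → 2 ≤ cnt T F x → T.anc m x → x = m := by
    intro k
    induction k with
    | zero => intro w _ hc h; have := hbound w hc; omega
    | succ k ih =>
      intro w hw hc hk
      by_cases hmin : ∀ x, x ≠ T.root → 2 ≤ cnt T F x → T.anc w x → x = w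
      · exact ⟨w, hw, hc, hmin⟩
      · push_neg at hmin
        obtain ⟨x, hx1, hx2, hx3, hx4⟩ := hmin
        have hd : depth T w < depth T x := depth_lt_of_anc T hw hx3 hx4
        have hb : depth T x ≤ N := hbound x hx2
        exact ih x hx1 hx2 (by omega)
  exact main (N + 1 - depth T w0) w0 h0 hc0 (by have := hbound w0 hc0; omega)


lemma cnt_cons (T : ArcTree V) (e : Sym2 V) (F : Multiset (Sym2 V)) (x : V) :
    cnt T (e ::ₘ F) x = cnt T F x +
      (if ∃ a b : V, e = Sym2.mk a b ∧ T.anc x a ∧ ¬ T.anc x b then 1 else 0) := by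
  by_cases h : ∃ a b : V, e = Sym2.mk a b ∧ T.anc x a ∧ ¬ T.anc x b
  · rw [cnt_cons_pos T h, if_pos h]
  · rw [cnt_cons_neg T h, if_neg h]; omega

lemma key (T : ArcTree V) (w u1 v1 u2 v2 : V) (F₀ : Multiset (Sym2 V))
    (G₀ : Multiset (V × V))
    (hv1 : T.anc w v1) (hu1 : ¬ T.anc w u1) (hv2 : T.anc w v2) (hu2 : ¬ T.anc w u2)
    (hmin : ∀ x, x ≠ T.root → T.anc w x → x ≠ w →
      ¬ 2 ≤ cnt T (Sym2.mk v1 u1 ::ₘ Sym2.mk v2 u2 ::ₘ F₀) x)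
    (hG : ∀ x, x ≠ T.root → 2 ≤ cnt T (Sym2.mk u1 u2 ::ₘ F₀) x →
      (∃ p ∈ (u1, u2) ::ₘ G₀, T.anc x p.1 ∧ ¬ T.anc x p.2) ∧
      (∃ p ∈ (u1, u2) ::ₘ G₀, T.anc x p.2 ∧ ¬ T.anc x p.1)) :
    ∀ x, x ≠ T.root → 2 ≤ cnt T (Sym2.mk v1 u1 ::ₘ Sym2.mk v2 u2 ::ₘ F₀) x →
      (∃ p ∈ (u1, v1) ::ₘ (v2, u2) ::ₘ G₀, T.anc x p.1 ∧ ¬ T.anc x p.2) ∧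
      (∃ p ∈ (u1, v1) ::ₘ (v2, u2) ::ₘ G₀, T.anc x p.2 ∧ ¬ T.anc x p.1) := by
  intro x hx hcnt
  have m1 : (u1, v1) ∈ (u1, v1) ::ₘ (v2, u2) ::ₘ G₀ := Multiset.mem_cons_self _ _
  have m2 : (v2, u2) ∈ (u1, v1) ::ₘ (v2, u2) ::ₘ G₀ :=
    Multiset.mem_cons_of_mem (Multiset.mem_cons_self _ _)
  have mG : ∀ p ∈ G₀, p ∈ (u1, v1) ::ₘ (v2, u2) ::ₘ G₀ := fun p hp =>
    Multiset.mem_cons_of_mem (Multiset.mem_cons_of_mem hp)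
  by_cases hwx : T.anc w x
  · by_cases hxw : x = w
    · subst hxw
      exact ⟨⟨(v2, u2), m2, hv2, hu2⟩, ⟨(u1, v1), m1, hv1, hu1⟩⟩
    · exact absurd hcnt (hmin x hx hwx hxw)
  · by_cases hxw : T.anc x w
    · -- x is a strict ancestor-side vertex: v1, v2 are in the subtree of x
      have hQ : T.anc x v1 := anc_trans T hxw hv1
      have hS : T.anc x v2 := anc_trans T hxw hv2
      by_cases hP : T.anc x u1 <;> by_cases hR : T.anc x u2
      · -- B2 : both u1, u2 inside; no crossings from the pair; inherit
        have hceq : cnt T (Sym2.mk u1 u2 ::ₘ F₀) x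
            = cnt T (Sym2.mk v1 u1 ::ₘ Sym2.mk v2 u2 ::ₘ F₀) x := by
          simp only [cnt_cons, crossP_mk]
          simp [hP, hQ, hR, hS]
        obtain ⟨⟨p, hp, hp1, hp2⟩, ⟨q, hq, hq1, hq2⟩⟩ :=
          hG x hx (by rw [hceq]; exact hcnt)
        constructor
        · rcases Multiset.mem_cons.mp hp with heq | hp'
          · rw [heq] at hp2; exact absurd hR hp2
          · exact ⟨p, mG p hp', hp1, hp2⟩
        · rcases Multiset.mem_cons.mp hq with heq | hq'
          · rw [heq] at hq2; exact absurd hP hq2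
          · exact ⟨q, mG q hq', hq1, hq2⟩
      · -- B3 : u1 inside, u2 outside; OUT via (v2,u2); IN inherited
        have hceq : cnt T (Sym2.mk u1 u2 ::ₘ F₀) x
            = cnt T (Sym2.mk v1 u1 ::ₘ Sym2.mk v2 u2 ::ₘ F₀) x := by
          simp only [cnt_cons, crossP_mk]
          simp [hP, hQ, hR, hS]
        obtain ⟨-, ⟨q, hq, hq1, hq2⟩⟩ := hG x hx (by rw [hceq]; exact hcnt)
        refine ⟨⟨(v2, u2), m2, hS, hR⟩, ?_⟩
        rcases Multiset.mem_cons.mp hq with heq | hq'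
        · rw [heq] at hq1; exact absurd hq1 hR
        · exact ⟨q, mG q hq', hq1, hq2⟩
      · -- B4 : u1 outside, u2 inside; IN via (u1,v1); OUT inherited
        have hceq : cnt T (Sym2.mk u1 u2 ::ₘ F₀) x
            = cnt T (Sym2.mk v1 u1 ::ₘ Sym2.mk v2 u2 ::ₘ F₀) x := by
          simp only [cnt_cons, crossP_mk]
          simp [hP, hQ, hR, hS]
        obtain ⟨⟨p, hp, hp1, hp2⟩, -⟩ := hG x hx (by rw [hceq]; exact hcnt)
        refine ⟨?_, ⟨(u1, v1), m1, hQ, hP⟩⟩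
        rcases Multiset.mem_cons.mp hp with heq | hp'
        · rw [heq] at hp1; exact absurd hp1 hP
        · exact ⟨p, mG p hp', hp1, hp2⟩
      · -- B1 : both outside; automatic in both directions
        exact ⟨⟨(v2, u2), m2, hS, hR⟩, ⟨(u1, v1), m1, hQ, hP⟩⟩
    · -- x incomparable with w; v1, v2 are outside the subtree of x
      have hQ : ¬ T.anc x v1 := fun h => (anc_comparable T h hv1).elim hxw hwx
      have hS : ¬ T.anc x v2 := fun h => (anc_comparable T h hv2).elim hxw hwx
      by_cases hP : T.anc x u1 <;> by_cases hR : T.anc x u2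
      · -- C2 : both inside; automatic
        exact ⟨⟨(u1, v1), m1, hP, hQ⟩, ⟨(v2, u2), m2, hR, hS⟩⟩
      · -- C3 : u1 inside only; OUT via (u1,v1); IN inherited
        have hceq : cnt T (Sym2.mk u1 u2 ::ₘ F₀) x
            = cnt T (Sym2.mk v1 u1 ::ₘ Sym2.mk v2 u2 ::ₘ F₀) x := by
          simp only [cnt_cons, crossP_mk]
          simp [hP, hQ, hR, hS]
        obtain ⟨-, ⟨q, hq, hq1, hq2⟩⟩ := hG x hx (by rw [hceq]; exact hcnt)
        refine ⟨⟨(u1, v1), m1, hP, hQ⟩, ?_⟩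
        rcases Multiset.mem_cons.mp hq with heq | hq'
        · rw [heq] at hq1; exact absurd hq1 hR
        · exact ⟨q, mG q hq', hq1, hq2⟩
      · -- C4 : u2 inside only; IN via (v2,u2); OUT inherited
        have hceq : cnt T (Sym2.mk u1 u2 ::ₘ F₀) x
            = cnt T (Sym2.mk v1 u1 ::ₘ Sym2.mk v2 u2 ::ₘ F₀) x := by
          simp only [cnt_cons, crossP_mk]
          simp [hP, hQ, hR, hS]
        obtain ⟨⟨p, hp, hp1, hp2⟩, -⟩ := hG x hx (by rw [hceq]; exact hcnt)
        refine ⟨?_, ⟨(v2, u2), m2, hR, hS⟩⟩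
        rcases Multiset.mem_cons.mp hp with heq | hp'
        · rw [heq] at hp1; exact absurd hp1 hP
        · exact ⟨p, mG p hp', hp1, hp2⟩
      · -- C1 : none inside; inherit both
        have hceq : cnt T (Sym2.mk u1 u2 ::ₘ F₀) x
            = cnt T (Sym2.mk v1 u1 ::ₘ Sym2.mk v2 u2 ::ₘ F₀) x := by
          simp only [cnt_cons, crossP_mk]
          simp [hP, hQ, hR, hS]
        obtain ⟨⟨p, hp, hp1, hp2⟩, ⟨q, hq, hq1, hq2⟩⟩ :=
          hG x hx (by rw [hceq]; exact hcnt)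
        constructor
        · rcases Multiset.mem_cons.mp hp with heq | hp'
          · rw [heq] at hp1; exact absurd hp1 hP
          · exact ⟨p, mG p hp', hp1, hp2⟩
        · rcases Multiset.mem_cons.mp hq with heq | hq'
          · rw [heq] at hq1; exact absurd hq1 hR
          · exact ⟨q, mG q hq', hq1, hq2⟩

end TwoCoverAux

open TwoCoverAux in
/-- If a multiset `F` of undirected links crosses every fundamental cut
of the tree at least twice (with multiplicity), then `F` can be oriented so that every
fundamental cut is crossed at least once in each direction. Fundamental cuts are the
shores `S_w = {x : w is an ancestor of x}` for non-root `w`. -/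
theorem two_cover_orientation {V : Type*} (T : ArcTree V) (F : Multiset (Sym2 V))
    (hcover : ∀ w : V, w ≠ T.root →
      2 ≤ (F.filter (fun e => ∃ a b : V, e = Sym2.mk a b ∧
            T.anc w a ∧ ¬ T.anc w b)).card) :
    ∃ G : Multiset (V × V), G.map (fun p => Sym2.mk p.1 p.2) = F ∧
      ∀ w : V, w ≠ T.root →
        (∃ p ∈ G, T.anc w p.1 ∧ ¬ T.anc w p.2) ∧
        (∃ p ∈ G, T.anc w p.2 ∧ ¬ T.anc w p.1) := by
  have main : ∀ n (Fs : Multiset (Sym2 V)), Fs.card ≤ n →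
      ∃ G : Multiset (V × V), G.map (fun p => Sym2.mk p.1 p.2) = Fs ∧
        ∀ w : V, w ≠ T.root → 2 ≤ cnt T Fs w →
          (∃ p ∈ G, T.anc w p.1 ∧ ¬ T.anc w p.2) ∧
          (∃ p ∈ G, T.anc w p.2 ∧ ¬ T.anc w p.1) := by
    intro n
    induction n with
    | zero =>
      intro Fs hFs
      obtain rfl : Fs = 0 := Multiset.card_eq_zero.mp (Nat.le_zero.mp hFs)
      exact ⟨0, rfl, fun w' h1 hc => by simp [cnt] at hc⟩
    | succ n ih =>
      intro Fs hFs
      by_cases hex : ∃ w', w' ≠ T.root ∧ 2 ≤ cnt T Fs w'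
      · obtain ⟨w0, h0, hc0⟩ := hex
        obtain ⟨w, hw, hcw, hminw⟩ := exists_min T Fs w0 h0 hc0
        have hcw' : 2 ≤ (Fs.filter (fun e => ∃ a b : V, e = Sym2.mk a b ∧
            T.anc w a ∧ ¬ T.anc w b)).card := hcw
        obtain ⟨e1, e2, F₀, hFeq, he1, he2⟩ := exists_two _ Fs hcw'
        obtain ⟨v1, u1, he1eq, hv1, hu1⟩ := he1
        obtain ⟨v2, u2, he2eq, hv2, hu2⟩ := he2
        subst hFeq; subst he1eq; subst he2eq
        have hcard : (Sym2.mk u1 u2 ::ₘ F₀).card ≤ n := by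
          simp only [Multiset.card_cons] at hFs ⊢; omega
        obtain ⟨G', hG'map, hG'good⟩ := ih (Sym2.mk u1 u2 ::ₘ F₀) hcard
        have hmem : Sym2.mk u1 u2 ∈ G'.map (fun p => Sym2.mk p.1 p.2) := by
          rw [hG'map]; exact Multiset.mem_cons_self _ _
        rw [Multiset.mem_map] at hmem
        obtain ⟨p0, hp0mem, hp0⟩ := hmem
        obtain ⟨G₀, rfl⟩ := Multiset.exists_cons_of_mem hp0mem
        have hG₀map : G₀.map (fun p => Sym2.mk p.1 p.2) = F₀ := by
          rw [Multiset.map_cons, hp0] at hG'map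
          exact (Multiset.cons_inj_right _).mp hG'map
        obtain ⟨a, b⟩ := p0
        have hp0' := hp0
        rw [Sym2.eq_iff] at hp0'
        rcases hp0' with ⟨rfl, rfl⟩ | ⟨rfl, rfl⟩
        · -- p0 = (u1, u2)
          have hmin : ∀ x, x ≠ T.root → T.anc w x → x ≠ w →
              ¬ 2 ≤ cnt T (Sym2.mk v1 a ::ₘ Sym2.mk v2 b ::ₘ F₀) x :=
            fun x h1 h2 h3 hc => h3 (hminw x h1 hc h2)
          have hres := key T w a v1 b v2 F₀ G₀ hv1 hu1 hv2 hu2 hmin hG'good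
          refine ⟨(a, v1) ::ₘ (v2, b) ::ₘ G₀, ?_, hres⟩
          rw [Multiset.map_cons, Multiset.map_cons, hG₀map]
          have h1 : Sym2.mk a v1 = Sym2.mk v1 a := Sym2.eq_swap
          rw [h1]
        · -- p0 = (u2, u1) : here a plays the role of u2, b of u1
          have hsw : Sym2.mk v1 b ::ₘ Sym2.mk v2 a ::ₘ F₀
              = Sym2.mk v2 a ::ₘ Sym2.mk v1 b ::ₘ F₀ := Multiset.cons_swap _ _ _
          have hmin : ∀ x, x ≠ T.root → T.anc w x → x ≠ w →
              ¬ 2 ≤ cnt T (Sym2.mk v2 a ::ₘ Sym2.mk v1 b ::ₘ F₀) x :=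
            fun x h1 h2 h3 hc => h3 (hminw x h1 (by rw [hsw]; exact hc) h2)
          have hswu : Sym2.mk a b = Sym2.mk b a := Sym2.eq_swap
          have hG2 : ∀ x, x ≠ T.root → 2 ≤ cnt T (Sym2.mk a b ::ₘ F₀) x →
              (∃ p ∈ (a, b) ::ₘ G₀, T.anc x p.1 ∧ ¬ T.anc x p.2) ∧
              (∃ p ∈ (a, b) ::ₘ G₀, T.anc x p.2 ∧ ¬ T.anc x p.1) :=
            fun x h1 hc => hG'good x h1 (by rw [hswu] at hc; exact hc)
          have hres := key T w a v2 b v1 F₀ G₀ hv2 hu2 hv1 hu1 hmin hG2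
          refine ⟨(a, v2) ::ₘ (v1, b) ::ₘ G₀, ?_, ?_⟩
          · rw [Multiset.map_cons, Multiset.map_cons, hG₀map]
            have h1 : Sym2.mk a v2 = Sym2.mk v2 a := Sym2.eq_swap
            rw [h1, Multiset.cons_swap]
          · intro x h1 hc
            exact hres x h1 (by rw [← hsw]; exact hc)
      · obtain ⟨G, hG⟩ := exists_lift Fs
        exact ⟨G, hG, fun w' h1 hc => (hex ⟨w', h1, hc⟩).elim⟩
  obtain ⟨G, h1, h2⟩ := main F.card F le_rfl
  exact ⟨G, h1, fun w hw => h2 w hw (hcover w hw)⟩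
end

section
/- There exists an instance of unweighted directed tree augmentation (a directed tree on 6 vertices with 5 links) whose natural set-covering LP relaxation has optimal value 5/2 while the minimum integral solution has size 3; hence the integrality gap of the set-covering LP for DTAP is at least 6/5. -/
/-!
The five arcs and five links of the instance form an odd cycle: every link covers two arcs
and every arc is covered by two links, as the edges of `C₅` cover its vertices. Giving every
link `1/2` is therefore LP-feasible of value `5/2`. Conversely, since each link covers only two
of the five arcs, double counting the covering constraints gives `5 ≤ 2 ∑ x` for every
fractional solution and `5 ≤ 2 |F|` for every integral one, so the optima are `5/2` and `3`.
-/

open scoped Classical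

open Finset

section SetCover

variable {ι α : Type*} (cov : ι → α → Prop) (L : Finset ι) (A : Finset α)

theorem card_le_mul_sum_of_card_covered_le {k : ℕ}
    (hk : ∀ ℓ ∈ L, #{a ∈ A | cov ℓ a} ≤ k) {x : ι → ℝ} (hx : ∀ ℓ, 0 ≤ x ℓ)
    (hcov : ∀ a ∈ A, 1 ≤ ∑ ℓ ∈ L, if cov ℓ a then x ℓ else 0) :
    (#A : ℝ) ≤ k * ∑ ℓ ∈ L, x ℓ :=
  calc (#A : ℝ) = ∑ _a ∈ A, (1 : ℝ) := by simp
    _ ≤ ∑ a ∈ A, ∑ ℓ ∈ L, if cov ℓ a then x ℓ else 0 := sum_le_sum hcov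
    _ = ∑ ℓ ∈ L, #{a ∈ A | cov ℓ a} * x ℓ := by
      rw [sum_comm]
      refine sum_congr rfl fun ℓ _ => ?_
      rw [← sum_filter, sum_const, nsmul_eq_mul]
    _ ≤ ∑ ℓ ∈ L, k * x ℓ :=
      sum_le_sum fun ℓ hℓ => mul_le_mul_of_nonneg_right (by exact_mod_cast hk ℓ hℓ) (hx ℓ)
    _ = k * ∑ ℓ ∈ L, x ℓ := (mul_sum ..).symm

theorem card_le_mul_card_of_card_covered_le {k : ℕ}
    (hk : ∀ ℓ ∈ L, #{a ∈ A | cov ℓ a} ≤ k) {F : Finset ι} (hFL : F ⊆ L)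
    (hF : ∀ a ∈ A, ∃ ℓ ∈ F, cov ℓ a) :
    #A ≤ k * #F :=
  calc #A ≤ #(F.biUnion fun ℓ => {a ∈ A | cov ℓ a}) :=
        card_le_card fun a ha => by simpa [ha] using hF a ha
    _ ≤ ∑ ℓ ∈ F, #{a ∈ A | cov ℓ a} := card_biUnion_le
    _ ≤ ∑ _ℓ ∈ F, k := sum_le_sum fun ℓ hℓ => hk ℓ (hFL hℓ)
    _ = k * #F := by rw [sum_const, smul_eq_mul, mul_comm]

theorem one_le_sum_of_le_card_covering {k : ℕ} (hk : 0 < k) {x : ι → ℝ}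
    (hxL : ∀ ℓ ∈ L, x ℓ = (k : ℝ)⁻¹) {a : α} (ha : k ≤ #{ℓ ∈ L | cov ℓ a}) :
    1 ≤ ∑ ℓ ∈ L, if cov ℓ a then x ℓ else 0 := by
  have hk' : (0 : ℝ) < k := by exact_mod_cast hk
  calc (1 : ℝ) = k * (k : ℝ)⁻¹ := (mul_inv_cancel₀ hk'.ne').symm
    _ ≤ #{ℓ ∈ L | cov ℓ a} * (k : ℝ)⁻¹ := by gcongr
    _ = ∑ ℓ ∈ L, if cov ℓ a then x ℓ else 0 := by
      rw [← sum_filter, ← nsmul_eq_mul, ← sum_const]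
      exact sum_congr rfl fun ℓ hℓ => (hxL ℓ (mem_filter.1 hℓ).1).symm

end SetCover

def gapParent : Fin 6 → Fin 6 := ![0, 0, 0, 0, 1, 1]

def gapTree : ArcTree (Fin 6) := ⟨0, gapParent, rfl, fun v => ⟨2, by fin_cases v <;> rfl⟩⟩

def gapOrient : Fin 6 → Bool := ![false, false, true, false, true, false]

-- Arcs covered: `(1, 2)` ↦ a₁ a₂, `(3, 2)` ↦ a₂ a₃, `(3, 4)` ↦ a₃ a₄,
-- `(5, 4)` ↦ a₄ a₅, `(5, 0)` ↦ a₅ a₁.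
def gapLinks : Finset (Fin 6 × Fin 6) := {(1, 2), (3, 2), (3, 4), (5, 0), (5, 4)}

theorem gapTree_anc_iff (x y : Fin 6) :
    gapTree.anc x y ↔ x = y ∨ x = gapParent y ∨ x = gapParent (gapParent y) := by
  constructor
  · rintro ⟨n, rfl⟩
    match n with
    | 0 => exact .inl rfl
    | 1 => exact .inr (.inl rfl)
    | n + 2 =>
      have h : gapParent (gapParent y) = 0 := by revert y; decide
      refine .inr (.inr ?_)
      rw [Function.iterate_add_apply, show gapTree.parent^[2] y = 0 from h,
        Function.iterate_fixed (show gapTree.parent 0 = 0 from rfl), h]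
  · rintro (rfl | rfl | rfl)
    exacts [⟨0, rfl⟩, ⟨1, rfl⟩, ⟨2, rfl⟩]

theorem gapLinks_card_covered_le_two :
    ∀ ℓ ∈ gapLinks,
      #{z ∈ univ.erase gapTree.root | covers gapTree gapOrient ℓ z} ≤ 2 := by
  simp only [covers, gapTree_anc_iff]
  decide

theorem two_le_card_gapLinks_covering :
    ∀ z ∈ univ.erase gapTree.root,
      2 ≤ #{ℓ ∈ gapLinks | covers gapTree gapOrient ℓ z} := by
  simp only [covers, gapTree_anc_iff]
  decide

theorem gapTree_feasible_triple : Feasible gapTree gapOrient {(1, 2), (3, 2), (5, 4)} := by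
  simp only [Feasible, covers, gapTree_anc_iff]
  decide

/-- There is a DTAP instance on 6 vertices with 5 (unit-cost) links whose
set-covering LP has optimal value `5/2` while the minimum integral solution has size `3`;
hence the integrality gap is at least `6/5`. -/
theorem dtap_integrality_gap_lower_bound :
    ∃ (V : Type) (hV : Fintype V) (T : ArcTree V) (up : V → Bool) (L : Finset (V × V)),
      @Fintype.card V hV = 6 ∧ L.card = 5 ∧
      -- a feasible fractional solution of value 5/2
      (∃ x : V × V → ℝ, (∀ ℓ, 0 ≤ x ℓ) ∧ (∀ ℓ ∉ L, x ℓ = 0) ∧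
        (∀ z, z ≠ T.root → 1 ≤ ∑ ℓ ∈ L, if covers T up ℓ z then x ℓ else 0) ∧
        ∑ ℓ ∈ L, x ℓ = 5 / 2) ∧
      -- every feasible fractional solution has value at least 5/2
      (∀ x : V × V → ℝ, (∀ ℓ, 0 ≤ x ℓ) →
        (∀ z, z ≠ T.root → 1 ≤ ∑ ℓ ∈ L, if covers T up ℓ z then x ℓ else 0) →
        5 / 2 ≤ ∑ ℓ ∈ L, x ℓ) ∧
      -- an integral solution of size 3
      (∃ F : Finset (V × V), F ⊆ L ∧ Feasible T up F ∧ F.card = 3) ∧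
      -- every integral solution has size at least 3
      (∀ F : Finset (V × V), F ⊆ L → Feasible T up F → 3 ≤ F.card) ∧
      -- hence the integrality gap is at least 6/5
      (6 / 5 : ℝ) ≤ 3 / (5 / 2) := by
  have hlinks : #gapLinks = 5 := by decide
  have harcs : #(univ.erase gapTree.root) = 5 := by decide
  have mem_arcs {z : Fin 6} (hz : z ≠ gapTree.root) : z ∈ univ.erase gapTree.root :=
    mem_erase.2 ⟨hz, mem_univ z⟩
  refine ⟨Fin 6, inferInstance, gapTree, gapOrient, gapLinks, Fintype.card_fin 6, hlinks,
    ⟨fun ℓ => if ℓ ∈ gapLinks then 2⁻¹ else 0, ?_, fun _ hℓ => if_neg hℓ, ?_, ?_⟩,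
    fun x hx hcov => ?_, ⟨_, by decide, gapTree_feasible_triple, by decide⟩,
    fun F hFL hF => ?_, by norm_num⟩
  · intro ℓ
    positivity
  · exact fun z hz => one_le_sum_of_le_card_covering _ _ two_pos
      (fun ℓ hℓ => by simp [hℓ]) (two_le_card_gapLinks_covering z (mem_arcs hz))
  · rw [sum_ite_of_true fun _ h => h, sum_const, hlinks]
    norm_num
  · have := card_le_mul_sum_of_card_covered_le _ _ _ gapLinks_card_covered_le_two hx
      fun z hz => hcov z (ne_of_mem_erase hz)
    rw [harcs] at this
    push_cast at this
    linarith
  · have := card_le_mul_card_of_card_covered_le _ _ _ gapLinks_card_covered_le_two hFL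
      fun z hz => hF z (ne_of_mem_erase hz)
    omega
end

section
/- Let M be the arc-link-coverage matrix of a WDTAP instance whose oriented tree T is an arborescence rooted at r (all arcs point away from r, or all point towards r). Then M is a network matrix and hence totally unimodular. -/
open scoped Classical

/-!
In an arborescence every link covers exactly the arcs `a_x` for `x` on a vertical path: from
one endpoint up to, but excluding, the least common ancestor of the two endpoints. Square
matrices whose rows are vertices and whose columns are such vertical paths have determinant
`0` or `±1`. Indeed, let `z` be a deepest row vertex. Restricted to the rows, every column
through `z` is a vertical path starting at `z`; these paths are nested, and subtracting the
shortest one from the others leaves vertical paths again while turning row `z` into a unit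
vector, so Laplace expansion along it reduces the size of the matrix.
-/

open Matrix

lemma Matrix.det_mem_range_signType_of_row_eq_single {R : Type*} [CommRing R] {k : ℕ}
    {A : Matrix (Fin (k + 1)) (Fin (k + 1)) R} {i j : Fin (k + 1)} (hA : A i = Pi.single j 1)
    (h : (A.submatrix i.succAbove j.succAbove).det ∈ Set.range SignType.cast) :
    A.det ∈ Set.range SignType.cast := by
  obtain ⟨s, hs⟩ := h
  have hadj : A.det = adjugate A j i := by rw [adjugate_apply, ← hA, updateRow_eq_self]
  refine ⟨(-1) ^ (i + j : ℕ) * s, ?_⟩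
  rw [hadj, adjugate_fin_succ_eq_det_submatrix, ← hs]
  simp

namespace ArcTree

variable {V : Type*} (T : ArcTree V)

lemma anc_refl (x : V) : T.anc x x := ⟨0, rfl⟩

lemma anc_trans {x y z : V} (hxy : T.anc x y) (hyz : T.anc y z) : T.anc x z := by
  obtain ⟨n, rfl⟩ := hxy
  obtain ⟨m, rfl⟩ := hyz
  exact ⟨n + m, Function.iterate_add_apply _ _ _ _⟩

lemma anc_root (x : V) : T.anc T.root x := T.reaches_root x

lemma iterate_root (n : ℕ) : T.parent^[n] T.root = T.root :=
  Function.iterate_fixed T.parent_root n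

lemma anc_total_of_anc {a b c : V} (ha : T.anc a c) (hb : T.anc b c) :
    T.anc a b ∨ T.anc b a := by
  obtain ⟨n, rfl⟩ := ha
  obtain ⟨m, rfl⟩ := hb
  rcases le_total n m with h | h
  · exact .inr ⟨m - n, by rw [← Function.iterate_add_apply, Nat.sub_add_cancel h]⟩
  · exact .inl ⟨n - m, by rw [← Function.iterate_add_apply, Nat.sub_add_cancel h]⟩

noncomputable def depth (x : V) : ℕ := Nat.find (T.reaches_root x)

lemma iterate_depth (x : V) : T.parent^[T.depth x] x = T.root :=
  Nat.find_spec (T.reaches_root x)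

lemma depth_le_of_iterate_eq_root {x : V} {n : ℕ} (h : T.parent^[n] x = T.root) :
    T.depth x ≤ n :=
  Nat.find_le h

lemma depth_lt_of_anc {x y : V} (h : T.anc x y) (hne : x ≠ y) : T.depth x < T.depth y := by
  obtain ⟨n, rfl⟩ := h
  by_contra! hle
  rcases lt_or_ge n (T.depth y) with hn | hn
  · have hn0 : n ≠ 0 := by rintro rfl; exact hne rfl
    have : T.parent^[T.depth y - n] (T.parent^[n] y) = T.root := by
      rw [← Function.iterate_add_apply, Nat.sub_add_cancel hn.le, iterate_depth]
    have := T.depth_le_of_iterate_eq_root this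
    omega
  · have hx : T.parent^[n] y = T.root := by
      rw [← Nat.sub_add_cancel hn, Function.iterate_add_apply, iterate_depth, iterate_root]
    have hy : y = T.root := by
      have := T.depth_le_of_iterate_eq_root (x := T.root) (n := 0) rfl
      rw [hx] at hle
      simpa [show T.depth y = 0 by omega] using T.iterate_depth y
    exact hne (by rw [hx, hy])

lemma anc_of_depth_le {a b c : V} (ha : T.anc a c) (hb : T.anc b c)
    (h : T.depth b ≤ T.depth a) : T.anc b a := by
  rcases T.anc_total_of_anc ha hb with hab | hba
  · rcases eq_or_ne a b with rfl | hne
    · exact T.anc_refl a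
    · exact absurd (T.depth_lt_of_anc hab hne) (not_lt.mpr h)
  · exact hba

lemma exists_isLca (u v : V) : ∃ w, T.isLca u v w := by
  have hex : ∃ n, T.anc (T.parent^[n] u) v := ⟨_, T.iterate_depth u ▸ T.anc_root v⟩
  refine ⟨T.parent^[Nat.find hex] u, ⟨_, rfl⟩, Nat.find_spec hex, ?_⟩
  rintro _ ⟨m, rfl⟩ hv
  have hm : Nat.find hex ≤ m := Nat.find_min' hex hv
  exact ⟨m - Nat.find hex, by rw [← Function.iterate_add_apply, Nat.sub_add_cancel hm]⟩

/-- The vertices `x` whose arc `a_x` lies on the `u`–`v` tree path on the side of `v`, i.e. on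
the vertical path from `v` up to the least common ancestor of `u` and `v`. -/
def upPath (u v : V) : Set V := {x | T.anc x v ∧ ¬ T.anc x u}

variable {T}

lemma mem_upPath_iff_of_depth_le {u v z x : V} (hz : z ∈ T.upPath u v)
    (hx : T.depth x ≤ T.depth z) : x ∈ T.upPath u v ↔ x ∈ T.upPath u z :=
  ⟨fun h => ⟨T.anc_of_depth_le hz.1 h.1 hx, h.2⟩, fun h => ⟨T.anc_trans h.1 hz.1, h.2⟩⟩

lemma upPath_sdiff_upPath {u u₀ z w : V} (hw : T.isLca u₀ z w) :
    T.upPath u z \ T.upPath u₀ z = T.upPath u w := by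
  ext x
  have hxw : T.anc x w ↔ T.anc x u₀ ∧ T.anc x z :=
    ⟨fun h => ⟨T.anc_trans h hw.1, T.anc_trans h hw.2.1⟩, fun h => hw.2.2 x h.1 h.2⟩
  simp only [upPath, Set.mem_sdiff, Set.mem_ofPred_eq, hxw]
  tauto

lemma upPath_subset_upPath_of_anc {u u' z w w' : V} (hw : T.isLca u z w) (hw' : T.isLca u' z w')
    (hww' : T.anc w w') : T.upPath u' z ⊆ T.upPath u z :=
  fun x ⟨hxz, hxu'⟩ =>
    ⟨hxz, fun hxu => hxu' (T.anc_trans (T.anc_trans (hw.2.2 x hxu hxz) hww') hw'.1)⟩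

lemma exists_upPath_subset {ι : Type*} (s : Finset ι) (hs : s.Nonempty) (u : ι → V) (z : V) :
    ∃ j₀ ∈ s, ∀ j ∈ s, T.upPath (u j₀) z ⊆ T.upPath (u j) z := by
  choose w hw using fun j => T.exists_isLca (u j) z
  obtain ⟨j₀, hj₀, hmax⟩ := s.exists_max_image (fun j => T.depth (w j)) hs
  exact ⟨j₀, hj₀, fun j hj => upPath_subset_upPath_of_anc (hw j) (hw j₀)
    (T.anc_of_depth_le (hw j₀).2.1 (hw j).2.1 (hmax j hj))⟩

variable {R : Type*} [CommRing R]

lemma indicator_upPath_eq_sub {u v u₀ v₀ z w x : V} (hz : z ∈ T.upPath u v)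
    (hz₀ : z ∈ T.upPath u₀ v₀) (hsub : T.upPath u₀ z ⊆ T.upPath u z) (hw : T.isLca u₀ z w)
    (hx : T.depth x ≤ T.depth z) :
    (T.upPath u w).indicator (1 : V → R) x =
      (T.upPath u v).indicator 1 x - (T.upPath u₀ v₀).indicator 1 x := by
  rw [← upPath_sdiff_upPath hw, Set.indicator_sdiff hsub]
  simp only [Pi.sub_apply, Set.indicator_apply, mem_upPath_iff_of_depth_le hz hx,
    mem_upPath_iff_of_depth_le hz₀ hx]

variable (T) in
noncomputable def upPathMatrix {ι κ : Type*} (f : ι → V) (c : κ → V × V) : Matrix ι κ R :=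
  Matrix.of fun i j => (T.upPath (c j).1 (c j).2).indicator 1 (f i)

lemma det_upPathMatrix_cut_eq {n : Type*} [Fintype n] [DecidableEq n] {f : n → V}
    {c : n → V × V} {z w : V} {j₀ : n} (hdeep : ∀ i, T.depth (f i) ≤ T.depth z)
    (hz₀ : z ∈ T.upPath (c j₀).1 (c j₀).2)
    (hmin : ∀ j, z ∈ T.upPath (c j).1 (c j).2 → T.upPath (c j₀).1 z ⊆ T.upPath (c j).1 z)
    (hw : T.isLca (c j₀).1 z w) :
    (T.upPathMatrix f (fun j => if j ≠ j₀ ∧ z ∈ T.upPath (c j).1 (c j).2 then ((c j).1, w)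
      else c j) : Matrix n n R).det = (T.upPathMatrix f c).det := by
  rw [← det_transpose, ← det_transpose (T.upPathMatrix f c)]
  refine det_eq_of_forall_row_eq_smul_add_const
    (fun j => if j ≠ j₀ ∧ z ∈ T.upPath (c j).1 (c j).2 then -1 else 0) j₀ (by simp)
    fun j i => ?_
  by_cases hj : j ≠ j₀ ∧ z ∈ T.upPath (c j).1 (c j).2
  · simp only [upPathMatrix, transpose_apply, of_apply, if_pos hj]
    rw [indicator_upPath_eq_sub hj.2 hz₀ (hmin j hj.2) hw (hdeep i)]
    ring
  · simp [upPathMatrix, hj]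

variable (T)

theorem det_upPathMatrix_mem_range_signType {k : ℕ} (f : Fin k → V) (c : Fin k → V × V) :
    (T.upPathMatrix f c : Matrix (Fin k) (Fin k) R).det ∈ Set.range SignType.cast := by
  induction k with
  | zero => exact ⟨1, by simp⟩
  | succ k ih =>
    obtain ⟨i₀, -, hdeep⟩ :=
      Finset.univ.exists_max_image (fun i => T.depth (f i)) Finset.univ_nonempty
    set z := f i₀
    set through := Finset.univ.filter fun j => z ∈ T.upPath (c j).1 (c j).2
    rcases through.eq_empty_or_nonempty with hempty | hne
    · refine ⟨0, (det_eq_zero_of_row_eq_zero i₀ fun j => ?_).symm⟩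
      have : z ∉ T.upPath (c j).1 (c j).2 := by
        simpa [through] using Finset.eq_empty_iff_forall_notMem.mp hempty j
      simp [upPathMatrix, z, this]
    obtain ⟨j₀, hj₀, hmin⟩ := exists_upPath_subset through hne (fun j => (c j).1) z
    have hz₀ : z ∈ T.upPath (c j₀).1 (c j₀).2 := (Finset.mem_filter.mp hj₀).2
    obtain ⟨w, hw⟩ := T.exists_isLca (c j₀).1 z
    set c' : Fin (k + 1) → V × V :=
      fun j => if j ≠ j₀ ∧ z ∈ T.upPath (c j).1 (c j).2 then ((c j).1, w) else c j
    have hdet : (T.upPathMatrix f c' : Matrix _ _ R).det = (T.upPathMatrix f c).det :=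
      det_upPathMatrix_cut_eq (fun i => hdeep i (Finset.mem_univ i)) hz₀
        (fun j hj => hmin j (by simp [through, hj])) hw
    have hrow : T.upPathMatrix f c' i₀ = Pi.single j₀ (1 : R) := by
      funext j
      change (T.upPath (c' j).1 (c' j).2).indicator 1 z = (Pi.single j₀ 1 : Fin (k + 1) → R) j
      rcases eq_or_ne j j₀ with rfl | hj
      · simp [c', hz₀]
      · rw [Pi.single_eq_of_ne hj, Set.indicator_of_notMem]
        by_cases hzj : z ∈ T.upPath (c j).1 (c j).2
        · simp only [c', if_pos (And.intro hj hzj)]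
          exact fun h => hz₀.2 (T.anc_trans h.1 hw.1)
        · have hc' : c' j = c j := if_neg fun h => hzj h.2
          rwa [hc']
    rw [← hdet]
    exact det_mem_range_signType_of_row_eq_single hrow (ih _ _)

theorem upPathMatrix_isTotallyUnimodular {ι κ : Type*} (f : ι → V) (c : κ → V × V) :
    (T.upPathMatrix f c : Matrix ι κ R).IsTotallyUnimodular :=
  (isTotallyUnimodular_iff _).mpr fun _ g h =>
    T.det_upPathMatrix_mem_range_signType (f ∘ g) (c ∘ h)

end ArcTree

section Arborescence

variable {V : Type*} {T : ArcTree V} {up : V → Bool} {ℓ : V × V} {z : V}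

lemma covers_iff_mem_upPath_of_forall_up (hup : ∀ v, up v = true) (hz : z ≠ T.root) :
    covers T up ℓ z ↔ z ∈ T.upPath ℓ.1 ℓ.2 := by
  simp [covers, ArcTree.upPath, hup, hz]

lemma covers_iff_mem_upPath_of_forall_down (hdown : ∀ v, up v = false) (hz : z ≠ T.root) :
    covers T up ℓ z ↔ z ∈ T.upPath ℓ.2 ℓ.1 := by
  simp [covers, ArcTree.upPath, hdown, hz]

end Arborescence

theorem arborescence_coverage_matrix_totallyUnimodular_general {V : Type*}
    (T : ArcTree V) (up : V → Bool)
    (harb : (∀ v : V, up v = true) ∨ (∀ v : V, up v = false))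
    (Lk : Type*) (ends : Lk → V × V)
    (M : Matrix {z : V // z ≠ T.root} Lk ℚ)
    (hM : ∀ a ℓ, M a ℓ = if covers T up (ends ℓ) a.1 then 1 else 0) :
    M.IsTotallyUnimodular := by
  obtain ⟨c, hc⟩ : ∃ c : Lk → V × V, ∀ (a : {z : V // z ≠ T.root}) ℓ,
      covers T up (ends ℓ) a.1 ↔ a.1 ∈ T.upPath (c ℓ).1 (c ℓ).2 := by
    rcases harb with hup | hdown
    · exact ⟨ends, fun a _ => covers_iff_mem_upPath_of_forall_up hup a.2⟩
    · exact ⟨Prod.swap ∘ ends, fun a _ => covers_iff_mem_upPath_of_forall_down hdown a.2⟩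
  have hMc : M = T.upPathMatrix Subtype.val c := by
    ext a ℓ
    simp [hM, hc, ArcTree.upPathMatrix, Set.indicator_apply]
  exact hMc ▸ T.upPathMatrix_isTotallyUnimodular _ _

/-- If the oriented tree of a WDTAP instance is an arborescence rooted
at `r` (all arcs point towards the root, or all point away from it), then the
arc-link-coverage matrix is (a network matrix and hence) totally unimodular. -/
theorem arborescence_coverage_matrix_totallyUnimodular {V : Type*} [Fintype V]
    (T : ArcTree V) (up : V → Bool)
    (harb : (∀ v : V, up v = true) ∨ (∀ v : V, up v = false))
    (Lk : Type*) (ends : Lk → V × V)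
    (M : Matrix {z : V // z ≠ T.root} Lk ℚ)
    (hM : ∀ a ℓ, M a ℓ = if covers T up (ends ℓ) a.1 then 1 else 0) :
    M.IsTotallyUnimodular :=
  arborescence_coverage_matrix_totallyUnimodular_general T up harb Lk ends M hM
end

section
/- Let x be a solution to the WDTAP set-covering LP, σ a splitting of L, and x' = split(x, σ). Then for every vertex v, every arc visible to v with respect to supp(x') is also visible to v with respect to supp(x). Consequently, the visible up-width and visible down-width of every vertex with respect to supp(x') is at most its visible up-width and down-width with respect to supp(x). -/
open scoped Classical

/-!
A link `ℓ'` with positive split value is a shadow of some link `ℓ` with `x ℓ > 0`. Every arc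
on the path of a shadow separates the endpoints of `ℓ'` exactly as it separates those of `ℓ`,
so `ℓ` covers every arc `ℓ'` covers, and the arcs witnessing that `v` is an inner vertex of the
generic shadow of `ℓ'` witness the same for `ℓ`. Hence visibility only shrinks under splitting,
and the widths, being maxima over visible arcs, can only decrease.
-/

namespace ArcTree

variable {V : Type*} {T : ArcTree V}

theorem anc_trans_s11 {a b c : V} (hab : T.anc a b) (hbc : T.anc b c) : T.anc a c := by
  obtain ⟨n, hn⟩ := hab
  obtain ⟨m, hm⟩ := hbc
  exact ⟨n + m, by rw [Function.iterate_add_apply, hm, hn]⟩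

end ArcTree

open ArcTree

section Shadow

variable {V : Type*} {T : ArcTree V} {up : V → Bool} {ℓ ℓ' : V × V} {z v : V}

theorem covers.not_anc_iff (h : covers T up ℓ z) : ¬ (T.anc z ℓ.1 ↔ T.anc z ℓ.2) := by
  rcases h.2 with ⟨h1, h2, _⟩ | ⟨h1, h2, _⟩ <;> tauto

theorem IsShadow.anc_iff (hs : IsShadow T ℓ ℓ') (hz : ¬ (T.anc z ℓ'.1 ↔ T.anc z ℓ'.2)) :
    (T.anc z ℓ.1 ↔ T.anc z ℓ'.1) ∧ (T.anc z ℓ.2 ↔ T.anc z ℓ'.2) := by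
  obtain ⟨⟨hfst, hfst_lca⟩, ⟨hsnd, hsnd_lca⟩⟩ := hs
  by_cases h1 : T.anc z ℓ'.1
  · have h2 : ¬ T.anc z ℓ'.2 := fun h => hz ⟨fun _ => h, fun _ => h1⟩
    have hw : ¬ T.anc z ℓ.2 := fun hw => h2 (hsnd_lca z h1 hw)
    have hu : T.anc z ℓ.1 := by
      rcases hfst with hc | hc
      · exact anc_trans_s11 h1 hc
      · exact absurd (anc_trans_s11 h1 hc) hw
    exact ⟨iff_of_true hu h1, iff_of_false hw h2⟩
  · have h2 : T.anc z ℓ'.2 := by tauto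
    have hw : T.anc z ℓ.2 := by
      rcases hsnd with hc | hc
      · exact absurd (anc_trans_s11 h2 hc) h1
      · exact anc_trans_s11 h2 hc
    have hu : ¬ T.anc z ℓ.1 := fun h => h1 (hfst_lca z h hw)
    exact ⟨iff_of_false hu h1, iff_of_true hw h2⟩

theorem IsShadow.covers (hs : IsShadow T ℓ ℓ') (hc : covers T up ℓ' z) : covers T up ℓ z := by
  obtain ⟨h1, h2⟩ := hs.anc_iff hc.not_anc_iff
  refine ⟨hc.1, ?_⟩
  rw [h1, h2]
  exact hc.2

theorem IsShadow.onPath (hs : IsShadow T ℓ ℓ') (hv : T.onPath ℓ'.1 ℓ'.2 v) :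
    T.onPath ℓ.1 ℓ.2 v := by
  obtain ⟨⟨hfst, hfst_lca⟩, ⟨hsnd, hsnd_lca⟩⟩ := hs
  have to_ends : ∀ y, T.anc y ℓ'.1 → T.anc y ℓ.1 ∨ T.anc y ℓ.2 := fun y hy =>
    hfst.imp (anc_trans_s11 hy) (anc_trans_s11 hy)
  refine ⟨?_, fun y hy1 hy2 => hv.2 y (hfst_lca y hy1 hy2) (hsnd_lca y (hfst_lca y hy1 hy2) hy2)⟩
  rcases hv.1 with h | h
  · exact to_ends v h
  · rcases hsnd with hc | hc
    · exact to_ends v (anc_trans_s11 h hc)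
    · exact Or.inr (anc_trans_s11 h hc)

theorem IsShadow.innerGeneric (hs : IsShadow T ℓ ℓ') (hv : innerGeneric T up ℓ' v) :
    innerGeneric T up ℓ v := by
  obtain ⟨hon, ⟨z₁, hc₁, hp₁⟩, ⟨z₂, hc₂, hp₂⟩⟩ := hv
  refine ⟨hs.onPath hon, ⟨z₁, hs.covers hc₁, hp₁.1, ?_⟩, ⟨z₂, hs.covers hc₂, hp₂.1, ?_⟩⟩
  · rw [(hs.anc_iff hc₁.not_anc_iff).1]
    exact hp₁.2
  · rw [(hs.anc_iff hc₂.not_anc_iff).2]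
    exact hp₂.2

theorem visibleArc_of_forall_exists_isShadow {L L' : Set (V × V)}
    (hL : ∀ ℓ' ∈ L', ∃ ℓ ∈ L, IsShadow T ℓ ℓ') (hvis : visibleArc T up L' v z) :
    visibleArc T up L v z := by
  obtain ⟨hvz, hzv, ℓ', hℓ', hc, hinner⟩ := hvis
  obtain ⟨ℓ, hℓ, hs⟩ := hL ℓ' hℓ'
  exact ⟨hvz, hzv, ℓ, hℓ, hs.covers hc, hs.innerGeneric hinner⟩

end Shadow

section Width

variable {V : Type*} {T : ArcTree V} {up : V → Bool} {L L' : Set (V × V)} {v : V} {k : ℕ}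

theorem upWidthLE.anti (hvis : ∀ z, visibleArc T up L' v z → visibleArc T up L v z)
    (h : upWidthLE T up L v k) : upWidthLE T up L' v k := fun S hS hSvis =>
  h S hS fun z hz => ⟨(hSvis z hz).1, hvis z (hSvis z hz).2⟩

theorem downWidthLE.anti (hvis : ∀ z, visibleArc T up L' v z → visibleArc T up L v z)
    (h : downWidthLE T up L v k) : downWidthLE T up L' v k := fun S hS hSvis =>
  h S hS fun z hz => ⟨(hSvis z hz).1, hvis z (hSvis z hz).2⟩

end Width

theorem exists_mem_pos_of_splitSol_pos {V : Type*} [Fintype V] {σ : V × V → Finset (V × V)}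
    {x : V × V → ℝ} {ℓ' : V × V} (h : 0 < splitSol σ x ℓ') : ∃ ℓ, ℓ' ∈ σ ℓ ∧ 0 < x ℓ := by
  by_contra! hneg
  refine h.not_ge (Finset.sum_nonpos fun ℓ _ => ?_)
  split_ifs with hmem
  exacts [hneg ℓ hmem, le_rfl]

theorem split_preserves_invisibility_general {V : Type*} [Fintype V]
    (T : ArcTree V) (up : V → Bool)
    (x : V × V → ℝ)
    (σ : V × V → Finset (V × V)) (hσ : IsSplitting T σ) :
    (∀ v z : V,
      visibleArc T up {ℓ | 0 < splitSol σ x ℓ} v z → visibleArc T up {ℓ | 0 < x ℓ} v z) ∧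
    (∀ v : V, ∀ k : ℕ,
      (upWidthLE T up {ℓ | 0 < x ℓ} v k → upWidthLE T up {ℓ | 0 < splitSol σ x ℓ} v k) ∧
      (downWidthLE T up {ℓ | 0 < x ℓ} v k →
        downWidthLE T up {ℓ | 0 < splitSol σ x ℓ} v k)) := by
  have shadow_of_support : ∀ ℓ' ∈ {ℓ | 0 < splitSol σ x ℓ}, ∃ ℓ ∈ {ℓ | 0 < x ℓ},
      IsShadow T ℓ ℓ' := fun ℓ' hℓ' => by
    obtain ⟨ℓ, hmem, hpos⟩ := exists_mem_pos_of_splitSol_pos hℓ'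
    exact ⟨ℓ, hpos, ((hσ ℓ).2.1 ℓ' hmem).1⟩
  have hvis : ∀ v z, visibleArc T up {ℓ | 0 < splitSol σ x ℓ} v z →
      visibleArc T up {ℓ | 0 < x ℓ} v z := fun _ _ =>
    visibleArc_of_forall_exists_isShadow shadow_of_support
  exact ⟨hvis, fun v _ => ⟨upWidthLE.anti (hvis v), downWidthLE.anti (hvis v)⟩⟩

/-- Splitting cannot create visibility: every arc visible to a vertex
w.r.t. the support of the split solution is visible w.r.t. the support of the original
solution. Consequently, the visible up-width and down-width of every vertex cannot
increase under splitting. -/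
theorem split_preserves_invisibility {V : Type*} [Fintype V]
    (T : ArcTree V) (up : V → Bool)
    (x : V × V → ℝ) (hx : FeasLP T up x)
    (σ : V × V → Finset (V × V)) (hσ : IsSplitting T σ) :
    (∀ v z : V,
      visibleArc T up {ℓ | 0 < splitSol σ x ℓ} v z → visibleArc T up {ℓ | 0 < x ℓ} v z) ∧
    (∀ v : V, ∀ k : ℕ,
      (upWidthLE T up {ℓ | 0 < x ℓ} v k → upWidthLE T up {ℓ | 0 < splitSol σ x ℓ} v k) ∧
      (downWidthLE T up {ℓ | 0 < x ℓ} v k →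
        downWidthLE T up {ℓ | 0 < splitSol σ x ℓ} v k)) :=
  split_preserves_invisibility_general T up x σ hσ
end

section
/- Let B be an ancestor-free set of arcs of a rooted tree having all the same orientation type (all up-arcs or all down-arcs). Then for any two distinct arcs b, b' ∈ B, no link can cover both b and b' in the wrong direction; i.e., {ℓ : b ∈ cov⃖(ℓ)} ∩ {ℓ : b' ∈ cov⃖(ℓ)} = ∅. -/
open scoped Classical

/- Arcs of one orientation that a link covers wrongly are all ancestors of the same endpoint
of the link (its tail for up-arcs, its head for down-arcs). Two distinct ancestors of a common
vertex lie on one root-ward path, so one of them is an ancestor of the other's parent, which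
ancestor-freeness forbids. -/

namespace ArcTree

variable {V : Type*} (T : ArcTree V)

theorem anc_iterate_of_le {u : V} {n m : ℕ} (h : n ≤ m) :
    T.anc (T.parent^[m] u) (T.parent^[n] u) :=
  ⟨m - n, by rw [← Function.iterate_add_apply, Nat.sub_add_cancel h]⟩

theorem anc_parent_or_anc_parent_of_anc {b b' u : V} (hne : b ≠ b') (hb : T.anc b u)
    (hb' : T.anc b' u) : T.anc b' (T.parent b) ∨ T.anc b (T.parent b') := by
  obtain ⟨n, rfl⟩ := hb
  obtain ⟨m, rfl⟩ := hb'
  rcases lt_trichotomy n m with h | rfl | h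
  · left
    rw [← Function.iterate_succ_apply' T.parent n u]
    exact T.anc_iterate_of_le h
  · exact absurd rfl hne
  · right
    rw [← Function.iterate_succ_apply' T.parent m u]
    exact T.anc_iterate_of_le h

end ArcTree

section Cover

variable {V : Type*} {T : ArcTree V}

theorem AncestorFree.eq_of_anc_of_anc {S : Set V} (hS : AncestorFree T S) {b b' u : V}
    (hb : b ∈ S) (hb' : b' ∈ S) (hbu : T.anc b u) (hb'u : T.anc b' u) : b = b' := by
  by_contra hne
  rcases T.anc_parent_or_anc_parent_of_anc hne hbu hb'u with h | h
  · exact hS b hb b' hb' hne h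
  · exact hS b' hb' b hb (Ne.symm hne) h

variable {up : V → Bool} {ℓ : V × V} {z : V}

theorem anc_fst_of_wcovers_of_up (hw : wcovers T up ℓ z) (hz : up z = true) :
    T.anc z ℓ.1 := by
  rcases hw with ⟨-, h | ⟨-, -, h⟩⟩
  · exact h.1
  · simp [hz] at h

theorem anc_snd_of_wcovers_of_down (hw : wcovers T up ℓ z) (hz : up z = false) :
    T.anc z ℓ.2 := by
  rcases hw with ⟨-, ⟨-, -, h⟩ | h⟩
  · simp [hz] at h
  · exact h.1

end Cover

theorem ancestor_free_no_double_wrong_cover_general {V : Type*}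
    (T : ArcTree V) (up : V → Bool) (B : Set V)
    (horient : (∀ z ∈ B, up z = true) ∨ (∀ z ∈ B, up z = false))
    (hfree : AncestorFree T B) :
    ∀ b ∈ B, ∀ b' ∈ B, b ≠ b' →
      ∀ ℓ : V × V, wcovers T up ℓ b → wcovers T up ℓ b' → False := by
  intro b hb b' hb' hne ℓ hw hw'
  rcases horient with hup | hdown
  · exact hne <| hfree.eq_of_anc_of_anc hb hb'
      (anc_fst_of_wcovers_of_up hw (hup b hb)) (anc_fst_of_wcovers_of_up hw' (hup b' hb'))
  · exact hne <| hfree.eq_of_anc_of_anc hb hb'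
      (anc_snd_of_wcovers_of_down hw (hdown b hb)) (anc_snd_of_wcovers_of_down hw' (hdown b' hb'))

/-- Let `B` be an ancestor-free set of arcs, all of the same
orientation type (all up-arcs or all down-arcs). Then no link covers two distinct arcs
of `B` in the wrong direction. -/
theorem ancestor_free_no_double_wrong_cover {V : Type*}
    (T : ArcTree V) (up : V → Bool) (B : Set V)
    (hB : ∀ z ∈ B, z ≠ T.root)
    (horient : (∀ z ∈ B, up z = true) ∨ (∀ z ∈ B, up z = false))
    (hfree : AncestorFree T B) :
    ∀ b ∈ B, ∀ b' ∈ B, b ≠ b' →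
      ∀ ℓ : V × V, wcovers T up ℓ b → wcovers T up ℓ b' → False :=
  ancestor_free_no_double_wrong_cover_general T up B horient hfree
end
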